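/- Let (X,d) be a metric space, ℓ, n ≥ 1, a : Fin ℓ → Fin n → X a colored point configuration, and let t* : Fin ℓ be a minimizer of the map t ↦ Σ_{i : Fin ℓ} EMD(a t, a i). Then for every b : Fin n → X, Σ_{i : Fin ℓ} EMD(a t*, a i) ≤ 2 · Σ_{i : Fin ℓ} EMD(a i, b). That is, using the points of the best single color as centers gives a 2-approximate fair n-median clustering. -/
import Mathlib


/-- The Earth Mover's distance between two `n`-tuples of points of a metric space:
the minimum over permutations `π` of `Fin n` of `∑ t, dist (x t) (y (π t))`. -/
noncomputable def EMD {X : Type*} [MetricSpace X] {n : ℕ} (x y : Fin n → X) : ℝ :=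
  Finset.univ.inf' ⟨1, Finset.mem_univ 1⟩
    (fun π : Equiv.Perm (Fin n) => ∑ t, dist (x t) (y (π t)))

lemma EMD_le_perm {X : Type*} [MetricSpace X] {n : ℕ} (x y : Fin n → X)
    (π : Equiv.Perm (Fin n)) : EMD x y ≤ ∑ t, dist (x t) (y (π t)) :=
  Finset.inf'_le _ (Finset.mem_univ π)

lemma EMD_exists {X : Type*} [MetricSpace X] {n : ℕ} (x y : Fin n → X) :
    ∃ π : Equiv.Perm (Fin n), EMD x y = ∑ t, dist (x t) (y (π t)) := by
  obtain ⟨π, _, h⟩ := Finset.exists_mem_eq_inf' (s := (Finset.univ : Finset (Equiv.Perm (Fin n))))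
    ⟨1, Finset.mem_univ 1⟩ (fun π => ∑ t, dist (x t) (y (π t)))
  exact ⟨π, h⟩

lemma EMD_symm_le {X : Type*} [MetricSpace X] {n : ℕ} (x y : Fin n → X) :
    EMD y x ≤ EMD x y := by
  obtain ⟨π, hπ⟩ := EMD_exists x y
  rw [hπ]
  calc EMD y x ≤ ∑ t, dist (y t) (x (π⁻¹ t)) := EMD_le_perm y x π⁻¹
    _ = ∑ s, dist (y (π s)) (x s) := (Equiv.sum_comp π (fun t => dist (y t) (x (π⁻¹ t)))).symm.trans
        (by simp)
    _ = ∑ s, dist (x s) (y (π s)) := by simp [dist_comm]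

lemma EMD_symm {X : Type*} [MetricSpace X] {n : ℕ} (x y : Fin n → X) :
    EMD x y = EMD y x :=
  le_antisymm (EMD_symm_le y x) (EMD_symm_le x y)

lemma EMD_triangle {X : Type*} [MetricSpace X] {n : ℕ} (x y z : Fin n → X) :
    EMD x z ≤ EMD x y + EMD y z := by
  obtain ⟨π, hπ⟩ := EMD_exists x y
  obtain ⟨σ, hσ⟩ := EMD_exists y z
  rw [hπ, hσ]
  calc EMD x z ≤ ∑ t, dist (x t) (z ((σ * π) t)) := EMD_le_perm x z (σ * π)
    _ ≤ ∑ t, (dist (x t) (y (π t)) + dist (y (π t)) (z (σ (π t)))) := by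
        exact Finset.sum_le_sum fun t _ => dist_triangle _ _ _
    _ = ∑ t, dist (x t) (y (π t)) + ∑ t, dist (y (π t)) (z (σ (π t))) := Finset.sum_add_distrib
    _ = ∑ t, dist (x t) (y (π t)) + ∑ s, dist (y s) (z (σ s)) := by
        rw [Equiv.sum_comp π (fun s => dist (y s) (z (σ s)))]

/-- The points of the best single color form a 2-approximate fair `n`-median
clustering: if `t*` minimizes `t ↦ ∑ i, EMD (a t) (a i)`, then for every center tuple
`b` we have `∑ i, EMD (a t*) (a i) ≤ 2 · ∑ i, EMD (a i) b`. -/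
theorem best_color_two_approx {X : Type*} [MetricSpace X] {ℓ n : ℕ}
    (hℓ : 1 ≤ ℓ) (hn : 1 ≤ n) (a : Fin ℓ → Fin n → X) (tstar : Fin ℓ)
    (htstar : ∀ t : Fin ℓ, ∑ i, EMD (a tstar) (a i) ≤ ∑ i, EMD (a t) (a i)) :
    ∀ b : Fin n → X,
      ∑ i, EMD (a tstar) (a i) ≤ 2 * ∑ i, EMD (a i) b := by
  intro b
  have : Nonempty (Fin ℓ) := ⟨⟨0, hℓ⟩⟩
  obtain ⟨t0, _, ht0⟩ := Finset.exists_min_image (Finset.univ : Finset (Fin ℓ))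
    (fun t => EMD (a t) b) Finset.univ_nonempty
  calc ∑ i, EMD (a tstar) (a i) ≤ ∑ i, EMD (a t0) (a i) := htstar t0
    _ ≤ ∑ i, (EMD (a t0) b + EMD b (a i)) :=
        Finset.sum_le_sum fun i _ => EMD_triangle _ _ _
    _ = ∑ i, EMD (a t0) b + ∑ i, EMD b (a i) := Finset.sum_add_distrib
    _ ≤ ∑ i, EMD (a i) b + ∑ i, EMD (a i) b := by
        gcongr with i hi
        · exact ht0 i (Finset.mem_univ i)
        · exact le_of_eq (EMD_symm _ _)
    _ = 2 * ∑ i, EMD (a i) b := by ring
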